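/- arXiv:1611.03935 — 5 statements merged into one kernel-verified Lean document; each statement's English description precedes it below -/
import Mathlib

section
/- For a standard Gaussian vector a in R^n and fixed unit vectors x0, x1 with angle θ between them, the expectation E[|⟨a, x0⟩ · ⟨a, x1⟩|] equals (2/π)(|sin θ| + arcsin(cos θ) · cos θ). -/
/-!
The law of `(⟪a, x0⟫, ⟪a, x1⟫)` under the standard Gaussian depends only on the Gram matrix of
`x0, x1` (its characteristic function is `exp (-‖c₀ x0 + c₁ x1‖² / 2)`), so `x0, x1` may be replaced
by `(1, 0)` and `(cos θ, sin θ)` in the plane. In polar coordinates the integrand becomes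
`r² |cos φ cos (φ - θ)|` against the density `(2π)⁻¹ r e^{-r²/2}`, so the integral factors into the
radial moment `∫ r³ e^{-r²/2} = 2` and the angular integral
`∫ |cos φ cos (φ - θ)| dφ = 2 (sin θ + (π/2 - θ) cos θ)`; finally `arcsin (cos θ) = π/2 - θ` on
`[0, π]`.
-/

open MeasureTheory ProbabilityTheory Real Set
open RealInnerProductSpace

theorem norm_sum_smul_eq_of_inner_eq {ι E F : Type*} [Fintype ι]
    [NormedAddCommGroup E] [InnerProductSpace ℝ E] [NormedAddCommGroup F] [InnerProductSpace ℝ F]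
    {v : ι → E} {w : ι → F} (h : ∀ i j, ⟪v i, v j⟫ = ⟪w i, w j⟫) (c : ι → ℝ) :
    ‖∑ i, c i • v i‖ = ‖∑ i, c i • w i‖ := by
  have hsq : ‖∑ i, c i • v i‖ ^ 2 = ‖∑ i, c i • w i‖ ^ 2 := by
    simp only [← real_inner_self_eq_norm_sq, sum_inner, inner_sum, real_inner_smul_left,
      real_inner_smul_right, h]
  exact (sq_eq_sq₀ (norm_nonneg _) (norm_nonneg _)).mp hsq

section InnerCoordinates

variable {ι G : Type*} [NormedAddCommGroup G] [InnerProductSpace ℝ G]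

theorem ContinuousLinearMap.coe_pi_innerSL (u : ι → G) :
    ⇑(ContinuousLinearMap.pi fun i ↦ innerSL ℝ (u i)) = fun a i ↦ ⟪a, u i⟫ := by
  ext a i
  simp [real_inner_comm]

theorem StrongDual.comp_pi_innerSL [Fintype ι] [DecidableEq ι] (L : StrongDual ℝ (ι → ℝ))
    (u : ι → G) :
    L.comp (ContinuousLinearMap.pi fun i ↦ innerSL ℝ (u i)) =
      innerSL ℝ (∑ i, L (Pi.single i 1) • u i) := by
  ext a
  rw [ContinuousLinearMap.comp_apply, innerSL_apply_apply, sum_inner, ← L.sum_comp_single]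
  refine Finset.sum_congr rfl fun i _ ↦ ?_
  rw [real_inner_smul_left, mul_comm, ← smul_eq_mul, ← map_smul, ← Pi.single_smul', smul_eq_mul,
    mul_one]
  simp

end InnerCoordinates

theorem map_inner_stdGaussian_eq_of_inner_eq {ι E F : Type*} [Fintype ι]
    [NormedAddCommGroup E] [InnerProductSpace ℝ E] [FiniteDimensional ℝ E] [MeasurableSpace E]
    [BorelSpace E] [NormedAddCommGroup F] [InnerProductSpace ℝ F] [FiniteDimensional ℝ F]
    [MeasurableSpace F] [BorelSpace F] {v : ι → E} {w : ι → F}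
    (h : ∀ i j, ⟪v i, v j⟫ = ⟪w i, w j⟫) :
    (stdGaussian E).map (fun a i ↦ ⟪a, v i⟫) = (stdGaussian F).map (fun a i ↦ ⟪a, w i⟫) := by
  classical
  rw [← ContinuousLinearMap.coe_pi_innerSL, ← ContinuousLinearMap.coe_pi_innerSL]
  refine Measure.ext_of_charFunDual (funext fun L ↦ ?_)
  rw [charFunDual_map, charFunDual_map, charFunDual_stdGaussian, charFunDual_stdGaussian,
    StrongDual.comp_pi_innerSL, StrongDual.comp_pi_innerSL, innerSL_apply_norm,
    innerSL_apply_norm, norm_sum_smul_eq_of_inner_eq h]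

section GaussianPlane

variable {E : Type*} [NormedAddCommGroup E] [NormedSpace ℝ E]

theorem inner_toLp_fin_two (a b c d : ℝ) :
    ⟪(!₂[a, b] : EuclideanSpace ℝ (Fin 2)), !₂[c, d]⟫ = a * c + b * d := by
  simp [PiLp.inner_apply, Fin.sum_univ_two, mul_comm]

theorem integral_stdGaussian_euclideanSpace_fin_two (f : EuclideanSpace ℝ (Fin 2) → E) :
    ∫ a, f a ∂stdGaussian (EuclideanSpace ℝ (Fin 2)) =
      ∫ p, f !₂[p.1, p.2] ∂(gaussianReal 0 1).prod (gaussianReal 0 1) := by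
  rw [← map_pi_eq_stdGaussian, ← MeasurableEquiv.coe_toLp, integral_map_equiv,
    ← (measurePreserving_finTwoArrow _).symm.integral_comp']
  rfl

theorem integral_prod_gaussianReal_eq_integral_smul (g : ℝ × ℝ → E) :
    ∫ p, g p ∂(gaussianReal 0 1).prod (gaussianReal 0 1) =
      ∫ p, (gaussianPDFReal 0 1 p.1 * gaussianPDFReal 0 1 p.2) • g p := by
  rw [gaussianReal_of_var_ne_zero _ one_ne_zero, prod_withDensity (measurable_gaussianPDF _ _)
    (measurable_gaussianPDF _ _), ← Measure.volume_eq_prod,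
    integral_withDensity_eq_integral_toReal_smul (by fun_prop)
      (ae_of_all _ fun _ ↦ ENNReal.mul_lt_top gaussianPDF_lt_top gaussianPDF_lt_top)]
  simp only [ENNReal.toReal_mul, toReal_gaussianPDF]

theorem gaussianPDFReal_mul_gaussianPDFReal_polar (r φ : ℝ) :
    gaussianPDFReal 0 1 (r * cos φ) * gaussianPDFReal 0 1 (r * sin φ) =
      (2 * π)⁻¹ * exp (-r ^ 2 / 2) := by
  have hsqrt : (√(2 * π))⁻¹ * (√(2 * π))⁻¹ = (2 * π)⁻¹ := by
    rw [← mul_inv, mul_self_sqrt (by positivity)]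
  simp only [gaussianPDFReal, NNReal.coe_one, mul_one, sub_zero]
  rw [mul_mul_mul_comm, hsqrt, ← exp_add]
  congr 2
  linear_combination (-r ^ 2 / 2) * sin_sq_add_cos_sq φ

theorem integral_prod_gaussianReal_eq_integral_polarCoord (g : ℝ × ℝ → E) :
    ∫ p, g p ∂(gaussianReal 0 1).prod (gaussianReal 0 1) =
      (2 * π)⁻¹ • ∫ q in polarCoord.target, (q.1 * exp (-q.1 ^ 2 / 2)) • g (polarCoord.symm q) := by
  rw [integral_prod_gaussianReal_eq_integral_smul, ← integral_comp_polarCoord_symm, ← integral_smul]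
  refine integral_congr_ae (ae_of_all _ fun q ↦ ?_)
  dsimp only
  rw [polarCoord_symm_apply, gaussianPDFReal_mul_gaussianPDFReal_polar, smul_smul, smul_smul]
  congr 1
  ring

end GaussianPlane

theorem integral_Ioi_pow_three_mul_exp_neg_sq_div_two :
    ∫ r in Ioi (0 : ℝ), r ^ 3 * exp (-r ^ 2 / 2) = 2 := by
  have h := integral_rpow_mul_exp_neg_mul_rpow (p := 2) (q := 3) (b := 1 / 2) (by norm_num)
    (by norm_num) (by norm_num)
  norm_num at h
  convert h using 5
  ring

theorem integral_cos_mul_cos_sub (θ a b : ℝ) :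
    ∫ φ in a..b, cos φ * cos (φ - θ) =
      (b * cos θ / 2 + sin (2 * b - θ) / 4) - (a * cos θ / 2 + sin (2 * a - θ) / 4) := by
  refine intervalIntegral.integral_eq_sub_of_hasDerivAt
    (f := fun φ ↦ φ * cos θ / 2 + sin (2 * φ - θ) / 4) (fun φ _ ↦ ?_)
    ((by fun_prop : Continuous fun φ ↦ cos φ * cos (φ - θ)).intervalIntegrable a b)
  have h := (((hasDerivAt_id' φ).mul_const (cos θ)).div_const 2).fun_add
    ((((hasDerivAt_id' φ).const_mul 2).sub_const θ).sin.div_const 4)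
  convert h using 1
  rw [cos_sub, cos_sub, cos_two_mul, sin_two_mul]
  ring

-- The integrand has period `π`; over the period `[θ - π/2, θ + π/2]` the factor `cos (φ - θ)`
-- is nonnegative and `cos φ` changes sign only at `π/2`.
theorem integral_Ioo_abs_cos_mul_cos_sub {θ : ℝ} (hθ : θ ∈ Icc 0 π) :
    ∫ φ in Ioo (-π) π, |cos φ * cos (φ - θ)| = 2 * (sin θ + (π / 2 - θ) * cos θ) := by
  obtain ⟨hθ0, hθπ⟩ := hθ
  set P : ℝ → ℝ := fun φ ↦ |cos φ * cos (φ - θ)|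
  have hP : Function.Periodic P π := fun φ ↦ by
    simp only [P, add_sub_right_comm, cos_add_pi, neg_mul_neg]
  have hPint : ∀ a b, IntervalIntegrable P volume a b :=
    fun a b ↦ Continuous.intervalIntegrable (by fun_prop) a b
  have two_periods : ∫ φ in Ioo (-π) π, P φ = 2 * ∫ φ in (θ - π / 2)..(θ - π / 2 + π), P φ := by
    rw [← integral_Ioc_eq_integral_Ioo, ← intervalIntegral.integral_of_le (by linarith [pi_pos]),
      ← hP.intervalIntegral_add_eq (-π)]
    have h := hP.intervalIntegral_add_zsmul_eq 2 (-π) hPint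
    simp only [zsmul_eq_mul, Int.cast_ofNat] at h
    rwa [show -π + 2 * π = π by ring] at h
  have nonneg_part : ∫ φ in (θ - π / 2)..(π / 2), P φ =
      ∫ φ in (θ - π / 2)..(π / 2), cos φ * cos (φ - θ) := by
    refine intervalIntegral.integral_congr fun φ hφ ↦ ?_
    rw [uIcc_of_le (by linarith)] at hφ
    exact abs_of_nonneg (mul_nonneg (cos_nonneg_of_mem_Icc ⟨by linarith [hφ.1], hφ.2⟩)
      (cos_nonneg_of_mem_Icc ⟨by linarith [hφ.1], by linarith [hφ.2]⟩))
  have nonpos_part : ∫ φ in (π / 2)..(θ - π / 2 + π), P φ =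
      -∫ φ in (π / 2)..(θ - π / 2 + π), cos φ * cos (φ - θ) := by
    rw [← intervalIntegral.integral_neg]
    refine intervalIntegral.integral_congr fun φ hφ ↦ ?_
    rw [uIcc_of_le (by linarith)] at hφ
    exact abs_of_nonpos (mul_nonpos_of_nonpos_of_nonneg
      (cos_nonpos_of_pi_div_two_le_of_le hφ.1 (by linarith [hφ.2]))
      (cos_nonneg_of_mem_Icc ⟨by linarith [hφ.1], by linarith [hφ.2]⟩))
  rw [two_periods, ← intervalIntegral.integral_add_adjacent_intervals (hPint _ (π / 2))
    (hPint _ _), nonneg_part, nonpos_part, integral_cos_mul_cos_sub, integral_cos_mul_cos_sub]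
  have e1 : 2 * (π / 2) - θ = π - θ := by ring
  have e2 : 2 * (θ - π / 2) - θ = θ - π := by ring
  have e3 : 2 * (θ - π / 2 + π) - θ = θ + π := by ring
  rw [e1, e2, e3, sin_pi_sub, sin_sub_pi, sin_add_pi]
  ring

theorem integral_abs_mul_prod_gaussianReal {θ : ℝ} (hθ : θ ∈ Icc 0 π) :
    ∫ p, |p.1 * (cos θ * p.1 + sin θ * p.2)| ∂(gaussianReal 0 1).prod (gaussianReal 0 1) =
      2 / π * (sin θ + (π / 2 - θ) * cos θ) := by
  have polar (q : ℝ × ℝ) : (q.1 * exp (-q.1 ^ 2 / 2)) •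
      |(polarCoord.symm q).1 * (cos θ * (polarCoord.symm q).1 + sin θ * (polarCoord.symm q).2)| =
      (q.1 ^ 3 * exp (-q.1 ^ 2 / 2)) * |cos q.2 * cos (q.2 - θ)| := by
    rw [polarCoord_symm_apply, smul_eq_mul, cos_sub,
      show q.1 * cos q.2 * (cos θ * (q.1 * cos q.2) + sin θ * (q.1 * sin q.2)) =
        q.1 ^ 2 * (cos q.2 * (cos q.2 * cos θ + sin q.2 * sin θ)) by ring,
      abs_mul, abs_of_nonneg (sq_nonneg q.1)]
    ring
  rw [integral_prod_gaussianReal_eq_integral_polarCoord, smul_eq_mul,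
    integral_congr_ae (ae_of_all _ polar), polarCoord_target, Measure.volume_eq_prod,
    ← Measure.prod_restrict, integral_prod_mul (f := fun r ↦ r ^ 3 * exp (-r ^ 2 / 2)) (g := fun φ ↦ |cos φ * cos (φ - θ)|),
    integral_Ioi_pow_three_mul_exp_neg_sq_div_two, integral_Ioo_abs_cos_mul_cos_sub hθ]
  field_simp

theorem expectation_abs_inner_mul_inner
    (n : ℕ) (x0 x1 : EuclideanSpace ℝ (Fin n))
    (hx0 : ‖x0‖ = 1) (hx1 : ‖x1‖ = 1)
    (θ : ℝ) (hθ : θ ∈ Set.Icc (0:ℝ) Real.pi)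
    (hcos : Real.cos θ = ⟪x0, x1⟫) :
    ∫ a : EuclideanSpace ℝ (Fin n),
        |⟪a, x0⟫ * ⟪a, x1⟫|
        ∂((Measure.pi fun _ : Fin n => gaussianReal 0 1).map
            (EuclideanSpace.equiv (Fin n) ℝ).symm) =
      (2 / Real.pi) * (|Real.sin θ| + Real.arcsin (Real.cos θ) * Real.cos θ) := by
  set w : Fin 2 → EuclideanSpace ℝ (Fin 2) := ![!₂[1, 0], !₂[cos θ, sin θ]]
  have gram : ∀ i j, ⟪![x0, x1] i, ![x0, x1] j⟫ = ⟪w i, w j⟫ := by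
    have h00 : ⟪x0, x0⟫ = 1 := by rw [real_inner_self_eq_norm_sq, hx0, one_pow]
    have h11 : ⟪x1, x1⟫ = 1 := by rw [real_inner_self_eq_norm_sq, hx1, one_pow]
    simp only [Fin.forall_fin_two, w, Matrix.cons_val_zero, Matrix.cons_val_one, inner_toLp_fin_two, h00, h11,
      ← hcos, real_inner_comm x0 x1]
    exact ⟨⟨by ring, by ring⟩, by ring, by rw [← sin_sq_add_cos_sq θ]; ring⟩
  have hf : Continuous fun p : Fin 2 → ℝ ↦ |p 0 * p 1| := by fun_prop
  calc _ = ∫ p, |p 0 * p 1| ∂(stdGaussian _).map (fun a i ↦ ⟪a, ![x0, x1] i⟫) := by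
        rw [show (Measure.pi fun _ ↦ gaussianReal 0 1).map (EuclideanSpace.equiv (Fin n) ℝ).symm =
            stdGaussian _ from map_pi_eq_stdGaussian,
          integral_map (by fun_prop) hf.aestronglyMeasurable]
        rfl
    _ = ∫ a, |⟪a, w 0⟫ * ⟪a, w 1⟫| ∂stdGaussian _ := by
        rw [map_inner_stdGaussian_eq_of_inner_eq gram,
          integral_map (by fun_prop) hf.aestronglyMeasurable]
    _ = ∫ p, |p.1 * (cos θ * p.1 + sin θ * p.2)| ∂(gaussianReal 0 1).prod (gaussianReal 0 1) := by
        rw [integral_stdGaussian_euclideanSpace_fin_two]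
        simp [w, inner_toLp_fin_two, mul_comm]
    _ = _ := by
        rw [integral_abs_mul_prod_gaussianReal hθ, arcsin_eq_pi_div_two_sub_arccos,
          arccos_cos hθ.1 hθ.2, abs_of_nonneg (sin_nonneg_of_nonneg_of_le_pi hθ.1 hθ.2)]
end

section
/- For all θ ∈ [0, π], |sin θ| + arcsin(cos θ) · cos θ ≥ 1. -/
/-! With `x = π/2 - θ` the claim becomes `1 ≤ cos x + x sin x` for `|x| ≤ π/2`. Since the
right side is even in `x`, take `0 ≤ x ≤ π/2`: there `cos x ≥ 1 - x²/2` and, by Jordan's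
inequality `sin x ≥ 2x/π`, `x sin x ≥ 2x²/π ≥ x²/2` because `π ≤ 4`. -/

open Real

lemma Real.one_le_cos_add_mul_sin_of_nonneg {x : ℝ} (hx₀ : 0 ≤ x) (hx : x ≤ π / 2) :
    1 ≤ cos x + x * sin x := by
  have hcos : 1 - x ^ 2 / 2 ≤ cos x := one_sub_sq_div_two_le_cos
  have hjordan : 2 / π * x ≤ sin x := mul_le_sin hx₀ hx
  have hpi : π ≤ 4 := pi_le_four
  have hquarter : x ^ 2 / 2 ≤ 2 / π * x ^ 2 := by
    rw [div_mul_eq_mul_div, le_div_iff₀ pi_pos]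
    nlinarith [sq_nonneg x]
  nlinarith [mul_le_mul_of_nonneg_left hjordan hx₀]

lemma Real.one_le_cos_add_mul_sin {x : ℝ} (hx : |x| ≤ π / 2) :
    1 ≤ cos x + x * sin x := by
  rcases le_total 0 x with hx₀ | hx₀
  · exact one_le_cos_add_mul_sin_of_nonneg hx₀ ((le_abs_self x).trans hx)
  · have := one_le_cos_add_mul_sin_of_nonneg (neg_nonneg.mpr hx₀) ((neg_le_abs x).trans hx)
    rwa [cos_neg, sin_neg, neg_mul_neg] at this

lemma Real.arcsin_cos {θ : ℝ} (h₀ : 0 ≤ θ) (hπ : θ ≤ π) : arcsin (cos θ) = π / 2 - θ := by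
  rw [arcsin_eq_pi_div_two_sub_arccos, arccos_cos h₀ hπ]

theorem sin_add_arcsin_cos_ge_one :
    ∀ θ ∈ Set.Icc (0 : ℝ) Real.pi,
      |Real.sin θ| + Real.arcsin (Real.cos θ) * Real.cos θ ≥ 1 := by
  rintro θ ⟨h₀, hπ⟩
  have hx : |π / 2 - θ| ≤ π / 2 := abs_le.mpr ⟨by linarith, by linarith⟩
  have key := one_le_cos_add_mul_sin hx
  rw [cos_pi_div_two_sub, sin_pi_div_two_sub] at key
  rw [abs_of_nonneg (sin_nonneg_of_nonneg_of_le_pi h₀ hπ), arcsin_cos h₀ hπ]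
  exact key
end

section
/- For independent standard Gaussian random variables a1, a2 and any angle θ, E[|a1 (a1 cos θ + a2 sin θ)|] = (2/π)(|sin θ| + arcsin(cos θ) cos θ). -/
/-!
In polar coordinates `(a₁, a₂) = (r cos φ, r sin φ)` the integrand is
`r² |cos φ cos (φ - θ)|` and the standard Gaussian density is `(2π)⁻¹ e^{-r²/2}`, so the
expectation factors as `(2π)⁻¹ (∫₀^∞ r³ e^{-r²/2} dr) (∫_{-π}^{π} |cos φ cos (φ - θ)| dφ)`.
The radial factor is `2`. Since `2 cos φ cos (φ - θ) = cos (2φ - θ) + cos θ`, periodicity reduces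
the angular factor to `∫_{-π}^{π} |cos u + c| du` with `c = cos θ`, which is computed by splitting
at the zeros `±(π/2 + arcsin c)` of `cos u + c`.
-/

open MeasureTheory ProbabilityTheory Real Set
open scoped NNReal

theorem integral_cos_add_const (a b c : ℝ) :
    ∫ u in a..b, (cos u + c) = sin b - sin a + c * (b - a) := by
  simp [intervalIntegral.integral_add, integral_cos]
  ring

theorem integral_abs_cos_add {c : ℝ} (hc₁ : -1 ≤ c) (hc₂ : c ≤ 1) :
    ∫ u in -π..π, |cos u + c| = 4 * √(1 - c ^ 2) + 4 * c * arcsin c := by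
  have hint (a b : ℝ) : IntervalIntegrable (fun u ↦ |cos u + c|) volume a b :=
    (continuous_cos.add continuous_const).abs.intervalIntegrable a b
  obtain ⟨α, hα⟩ : ∃ α, α = arcsin c + π / 2 := ⟨_, rfl⟩
  have hα₀ : 0 ≤ α := by linarith [neg_pi_div_two_le_arcsin c]
  have hαπ : α ≤ π := by linarith [arcsin_le_pi_div_two c]
  have hcos : cos α = -c := by rw [hα, cos_add_pi_div_two, sin_arcsin hc₁ hc₂]
  have hpos : ∫ u in 0..α, |cos u + c| = ∫ u in 0..α, (cos u + c) := by
    refine intervalIntegral.integral_congr fun u hu ↦ abs_of_nonneg ?_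
    rw [uIcc_of_le hα₀] at hu
    linarith [cos_le_cos_of_nonneg_of_le_pi hu.1 hαπ hu.2]
  have hneg : ∫ u in α..π, |cos u + c| = ∫ u in α..π, -(cos u + c) := by
    refine intervalIntegral.integral_congr fun u hu ↦ abs_of_nonpos ?_
    rw [uIcc_of_le hαπ] at hu
    linarith [cos_le_cos_of_nonneg_of_le_pi hα₀ hu.2 hu.1]
  have hsym : ∫ u in -π..0, |cos u + c| = ∫ u in 0..π, |cos u + c| := by
    simpa using (intervalIntegral.integral_comp_neg (a := 0) (b := π) fun u ↦ |cos u + c|).symm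
  rw [← intervalIntegral.integral_add_adjacent_intervals (hint _ 0) (hint 0 _), hsym,
    ← intervalIntegral.integral_add_adjacent_intervals (hint 0 α) (hint α π), hpos, hneg,
    intervalIntegral.integral_neg, integral_cos_add_const, integral_cos_add_const, hα,
    sin_add_pi_div_two, cos_arcsin]
  simp only [sin_zero, sin_pi]
  ring

theorem integral_abs_cos_mul_cos_sub (θ : ℝ) :
    ∫ φ in -π..π, |cos φ * cos (φ - θ)| = 2 * (|sin θ| + arcsin (cos θ) * cos θ) := by
  set g := fun u ↦ |cos u + cos θ|
  have hg : Function.Periodic g (2 * π) := fun u ↦ by simp [g]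
  have hint (a b : ℝ) : IntervalIntegrable g volume a b :=
    (continuous_cos.add continuous_const).abs.intervalIntegrable a b
  have hprod (φ : ℝ) : |cos φ * cos (φ - θ)| = g (2 * φ - θ) / 2 := by
    have hsum := two_mul_cos_mul_cos φ (φ - θ)
    rw [sub_sub_cancel, add_comm, ← add_sub_assoc, ← two_mul] at hsum
    simp only [g, ← hsum, mul_assoc, abs_mul, abs_two]
    ring
  have hperiod : ∫ u in -2 * π - θ..2 * π - θ, g u = 2 * ∫ u in -π..π, g u := by
    have h := hg.intervalIntegral_add_zsmul_eq 2 (-2 * π - θ) hint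
    rw [hg.intervalIntegral_add_eq _ (-π), zsmul_eq_mul, zsmul_eq_mul] at h
    convert h using 3 <;> push_cast <;> ring
  calc ∫ φ in -π..π, |cos φ * cos (φ - θ)|
      = (∫ u in -2 * π - θ..2 * π - θ, g u) / 4 := by
        simp_rw [hprod, intervalIntegral.integral_div,
          intervalIntegral.integral_comp_mul_sub (f := g) two_ne_zero]
        rw [smul_eq_mul, mul_neg, ← neg_mul]; ring
    _ = 2 * (|sin θ| + arcsin (cos θ) * cos θ) := by
        rw [hperiod, integral_abs_cos_add (neg_one_le_cos θ) (cos_le_one θ),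
          abs_sin_eq_sqrt_one_sub_cos_sq]
        ring

theorem integral_Ioi_pow_three_mul_exp_neg_mul_sq {b : ℝ} (hb : 0 < b) :
    ∫ r in Ioi 0, r ^ 3 * exp (-(b * r ^ 2)) = 1 / (2 * b ^ 2) := by
  have h := integral_rpow_mul_exp_neg_mul_rpow (p := 2) (q := 3) two_pos (by norm_num) hb
  norm_num [rpow_natCast] at h
  rw [h]
  ring

theorem gaussianReal_prod_gaussianReal {μ μ' : ℝ} {v v' : ℝ≥0} (hv : v ≠ 0) (hv' : v' ≠ 0) :
    (gaussianReal μ v).prod (gaussianReal μ' v') =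
      volume.withDensity fun p ↦ gaussianPDF μ v p.1 * gaussianPDF μ' v' p.2 := by
  rw [gaussianReal_of_var_ne_zero _ hv, gaussianReal_of_var_ne_zero _ hv',
    prod_withDensity (measurable_gaussianPDF _ _) (measurable_gaussianPDF _ _),
    Measure.volume_eq_prod]

theorem integral_gaussianReal_prod_eq_integral_smul {E : Type*} [NormedAddCommGroup E]
    [NormedSpace ℝ E] {μ μ' : ℝ} {v v' : ℝ≥0} (hv : v ≠ 0) (hv' : v' ≠ 0) (f : ℝ × ℝ → E) :
    ∫ p, f p ∂(gaussianReal μ v).prod (gaussianReal μ' v') =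
      ∫ p, (gaussianPDFReal μ v p.1 * gaussianPDFReal μ' v' p.2) • f p := by
  rw [gaussianReal_prod_gaussianReal hv hv', integral_withDensity_eq_integral_toReal_smul
    (by fun_prop) (ae_of_all _ fun _ ↦ ENNReal.mul_lt_top gaussianPDF_lt_top gaussianPDF_lt_top)]
  simp [toReal_gaussianPDF]

theorem integral_stdGaussian_prod_eq_integral_polar {E : Type*} [NormedAddCommGroup E]
    [NormedSpace ℝ E] (f : ℝ × ℝ → E) :
    ∫ p, f p ∂(gaussianReal 0 1).prod (gaussianReal 0 1) =
      (2 * π)⁻¹ • ∫ p in Ioi 0 ×ˢ Ioo (-π) π,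
        (p.1 * exp (-(p.1 ^ 2 / 2))) • f (polarCoord.symm p) := by
  rw [integral_gaussianReal_prod_eq_integral_smul one_ne_zero one_ne_zero,
    ← integral_comp_polarCoord_symm, polarCoord_target, ← integral_smul]
  refine setIntegral_congr_fun (measurableSet_Ioi.prod measurableSet_Ioo) fun ⟨r, φ⟩ _ ↦ ?_
  have hsqrt : (√(2 * π))⁻¹ * (√(2 * π))⁻¹ = (2 * π)⁻¹ := by
    rw [← mul_inv, mul_self_sqrt (by positivity)]
  have hexp : exp (-(r * cos φ) ^ 2 / 2) * exp (-(r * sin φ) ^ 2 / 2) = exp (-(r ^ 2 / 2)) := by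
    rw [← exp_add]
    congr 1
    linear_combination (-(r ^ 2) / 2) * sin_sq_add_cos_sq φ
  simp only [smul_smul, polarCoord_symm_apply, gaussianPDFReal, NNReal.coe_one, mul_one, sub_zero]
  congr 1
  rw [← hsqrt, ← hexp]
  ring

theorem expectation_abs_gaussian_product (θ : ℝ) :
    ∫ p : ℝ × ℝ, |p.1 * (p.1 * Real.cos θ + p.2 * Real.sin θ)|
        ∂((gaussianReal 0 1).prod (gaussianReal 0 1)) =
      (2 / Real.pi) * (|Real.sin θ| + Real.arcsin (Real.cos θ) * Real.cos θ) := by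
  have hpolar (r φ : ℝ) : (r * exp (-(r ^ 2 / 2))) •
      |r * cos φ * (r * cos φ * cos θ + r * sin φ * sin θ)| =
      r ^ 3 * exp (-(2⁻¹ * r ^ 2)) * |cos φ * cos (φ - θ)| := by
    rw [cos_sub, show r * cos φ * (r * cos φ * cos θ + r * sin φ * sin θ) =
      r ^ 2 * (cos φ * (cos φ * cos θ + sin φ * sin θ)) by ring, abs_mul, abs_sq, smul_eq_mul]
    ring_nf
  rw [integral_stdGaussian_prod_eq_integral_polar]
  simp only [polarCoord_symm_apply, hpolar]
  rw [Measure.volume_eq_prod, setIntegral_prod_mul (fun r ↦ r ^ 3 * exp (-(2⁻¹ * r ^ 2)))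
    (fun φ ↦ |cos φ * cos (φ - θ)|),
    integral_Ioi_pow_three_mul_exp_neg_mul_sq (by norm_num), ← integral_Ioc_eq_integral_Ioo,
    ← intervalIntegral.integral_of_le (by linarith [pi_pos]), integral_abs_cos_mul_cos_sub,
    smul_eq_mul]
  field_simp
end

section
/- Let x0 ∈ R^n be nonzero and a1, ..., am ∈ R^n with y_i = |⟨a_i, x0⟩|. Suppose φ ∈ R^n satisfies: for every nonzero h ∈ R^n, if ⟨a_i, h⟩⟨a_i, x0⟩ ≤ 0 for all i, then ⟨φ, h⟩ < 0. Then x0 is the unique maximizer of ⟨φ, x⟩ over the set {x : |⟨a_i, x⟩| ≤ y_i for all i}. -/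
open RealInnerProductSpace

theorem sub_mul_nonpos_of_abs_le_abs {R : Type*} [Ring R] [LinearOrder R] [IsStrictOrderedRing R]
    {u v : R} (h : |u| ≤ |v|) : (u - v) * v ≤ 0 := by
  have huv : u * v ≤ v * v :=
    calc u * v ≤ |u| * |v| := abs_mul u v ▸ le_abs_self _
      _ ≤ |v| * |v| := mul_le_mul_of_nonneg_right h (abs_nonneg v)
      _ = v * v := abs_mul_abs_self v
  rw [sub_mul]
  exact sub_nonpos.mpr huv

theorem inner_sub_mul_inner_nonpos_of_abs_inner_le {E : Type*} [NormedAddCommGroup E]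
    [InnerProductSpace ℝ E] {a x x0 : E} (h : |⟪a, x⟫| ≤ |⟪a, x0⟫|) :
    ⟪a, x - x0⟫ * ⟪a, x0⟫ ≤ 0 := by
  rw [inner_sub_right]
  exact sub_mul_nonpos_of_abs_le_abs h

theorem phasemax_unique_maximizer_general
    (n m : ℕ) (x0 φ : EuclideanSpace ℝ (Fin n)) (a : Fin m → EuclideanSpace ℝ (Fin n))
    (hcert : ∀ h : EuclideanSpace ℝ (Fin n), h ≠ 0 →
      (∀ i, ⟪a i, h⟫ * ⟪a i, x0⟫ ≤ 0) → ⟪φ, h⟫ < 0) :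
    (∀ i, |⟪a i, x0⟫| ≤ |⟪a i, x0⟫|) ∧
    ∀ x : EuclideanSpace ℝ (Fin n),
      (∀ i, |⟪a i, x⟫| ≤ |⟪a i, x0⟫|) → x ≠ x0 → ⟪φ, x⟫ < ⟪φ, x0⟫ := by
  refine ⟨fun _ => le_rfl, fun x hx hne => ?_⟩
  have hdescent : ⟪φ, x - x0⟫ < 0 :=
    hcert (x - x0) (sub_ne_zero.mpr hne) fun i => inner_sub_mul_inner_nonpos_of_abs_inner_le (hx i)
  rwa [inner_sub_right, sub_neg] at hdescent

theorem phasemax_unique_maximizer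
    (n m : ℕ) (x0 φ : EuclideanSpace ℝ (Fin n)) (a : Fin m → EuclideanSpace ℝ (Fin n))
    (hx0 : x0 ≠ 0)
    (hcert : ∀ h : EuclideanSpace ℝ (Fin n), h ≠ 0 →
      (∀ i, ⟪a i, h⟫ * ⟪a i, x0⟫ ≤ 0) → ⟪φ, h⟫ < 0) :
    (∀ i, |⟪a i, x0⟫| ≤ |⟪a i, x0⟫|) ∧
    ∀ x : EuclideanSpace ℝ (Fin n),
      (∀ i, |⟪a i, x⟫| ≤ |⟪a i, x0⟫|) → x ≠ x0 → ⟪φ, x⟫ < ⟪φ, x0⟫ :=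
  phasemax_unique_maximizer_general n m x0 φ a hcert
end

section
/- Let a_1,...,a_m, x0 ∈ R^n with ‖x0‖ = 1, and suppose that (i) ⟨(1/m)∑ a_i a_iᵀ, h x0ᵀ⟩ ≥ ⟨h, x0⟩ − ε‖h‖ for all h ∈ R^n, and (ii) (1/m)∑ |⟨a_i, h⟩||⟨a_i, x0⟩| ≥ 0.63‖h‖ for all h ∈ R^n, with ε = 0.03. Then for any nonzero h with ⟨a_i, h⟩⟨a_i, x0⟩ ≤ 0 for all i, we have ⟨h, x0⟩ ≤ −0.6‖h‖. -/
open RealInnerProductSpace Finset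

theorem sum_mul_eq_neg_sum_abs_mul_abs {ι R : Type*} [Ring R] [LinearOrder R]
    [IsStrictOrderedRing R] (s : Finset ι) (f g : ι → R) (hfg : ∀ i ∈ s, f i * g i ≤ 0) :
    ∑ i ∈ s, f i * g i = -∑ i ∈ s, |f i| * |g i| := by
  rw [← sum_neg_distrib]
  refine sum_congr rfl fun i hi => ?_
  rw [← abs_mul, abs_of_nonpos (hfg i hi), neg_neg]

theorem negative_correlation_step_general
    (n m : ℕ) (a : Fin m → EuclideanSpace ℝ (Fin n))
    (x0 : EuclideanSpace ℝ (Fin n))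
    (ε : ℝ) (hε : ε = 0.03)
    -- (i): ⟨(1/m)∑ aᵢaᵢᵀ, h x0ᵀ⟩ = (1/m)∑ ⟨aᵢ,h⟩⟨aᵢ,x0⟩ ≥ ⟨h,x0⟩ − ε‖h‖
    (hiso : ∀ h : EuclideanSpace ℝ (Fin n),
      (1 / (m:ℝ)) * ∑ i, ⟪a i, h⟫ * ⟪a i, x0⟫ ≥ ⟪h, x0⟫ - ε * ‖h‖)
    -- (ii)
    (hlow : ∀ h : EuclideanSpace ℝ (Fin n),
      (1 / (m:ℝ)) * ∑ i, |⟪a i, h⟫| * |⟪a i, x0⟫| ≥ 0.63 * ‖h‖) :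
    ∀ h : EuclideanSpace ℝ (Fin n), h ≠ 0 →
      (∀ i, ⟪a i, h⟫ * ⟪a i, x0⟫ ≤ 0) → ⟪h, x0⟫ ≤ -0.6 * ‖h‖ := by
  intro h _ hneg
  have hcorr := hiso h
  rw [sum_mul_eq_neg_sum_abs_mul_abs _ _ _ fun i _ => hneg i] at hcorr
  have habs := hlow h
  subst hε
  linarith

theorem negative_correlation_step
    (n m : ℕ) (hm : 0 < m) (a : Fin m → EuclideanSpace ℝ (Fin n))
    (x0 : EuclideanSpace ℝ (Fin n)) (hx0 : ‖x0‖ = 1)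
    (ε : ℝ) (hε : ε = 0.03)
    -- (i): ⟨(1/m)∑ aᵢaᵢᵀ, h x0ᵀ⟩ = (1/m)∑ ⟨aᵢ,h⟩⟨aᵢ,x0⟩ ≥ ⟨h,x0⟩ − ε‖h‖
    (hiso : ∀ h : EuclideanSpace ℝ (Fin n),
      (1 / (m:ℝ)) * ∑ i, ⟪a i, h⟫ * ⟪a i, x0⟫ ≥ ⟪h, x0⟫ - ε * ‖h‖)
    -- (ii)
    (hlow : ∀ h : EuclideanSpace ℝ (Fin n),
      (1 / (m:ℝ)) * ∑ i, |⟪a i, h⟫| * |⟪a i, x0⟫| ≥ 0.63 * ‖h‖) :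
    ∀ h : EuclideanSpace ℝ (Fin n), h ≠ 0 →
      (∀ i, ⟪a i, h⟫ * ⟪a i, x0⟫ ≤ 0) → ⟪h, x0⟫ ≤ -0.6 * ‖h‖ :=
  negative_correlation_step_general n m a x0 ε hε hiso hlow
end
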